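/- arXiv:2510.08409 — 2 statements merged into one kernel-verified Lean document; each statement's English description precedes it below -/
import Mathlib

section
/- Let $\sigma_j, \hat\sigma_j > 0$ for $j = 1, \dots, d$ with $\hat\sigma_j \neq 1$, and let $f(x) = \sum_{j=1}^d (\sqrt{x + (1-x)\hat\sigma_j^2} - \sigma_j)^2$ on $[0,1]$. Then $f$ is non-decreasing on $[0,1]$ if and only if $\sum_{j=1}^d (1 - \sigma_j/\hat\sigma_j)(1 - \hat\sigma_j^2) \geq 0$. -/
open Real Finset

lemma auxpos (s : ℝ) (hs : 0 < s) {t : ℝ} (h0 : 0 ≤ t) (h1 : t ≤ 1) :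
    0 < t + (1 - t) * s^2 := by
  rcases eq_or_lt_of_le h0 with h | h
  · have := pow_pos hs 2; nlinarith
  · nlinarith [mul_nonneg (sub_nonneg.2 h1) (sq_nonneg s)]

lemma auxident (σ s x y : ℝ) (hs : 0 < s) (hx0 : 0 ≤ x) (hx1 : x ≤ 1)
    (hy0 : 0 ≤ y) (hy1 : y ≤ 1) :
    (Real.sqrt (y + (1-y)*s^2) - σ)^2 - (Real.sqrt (x + (1-x)*s^2) - σ)^2 =
      (y - x) * ((1 - s^2) * (1 - 2*σ/(Real.sqrt (x + (1-x)*s^2) + Real.sqrt (y + (1-y)*s^2)))) := by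
  have hpx := auxpos s hs hx0 hx1
  have hpy := auxpos s hs hy0 hy1
  set A := Real.sqrt (x + (1-x)*s^2) with hA
  set B := Real.sqrt (y + (1-y)*s^2) with hB
  have hApos : 0 < A := Real.sqrt_pos.2 hpx
  have hBpos : 0 < B := Real.sqrt_pos.2 hpy
  have hA2 : A^2 = x + (1-x)*s^2 := Real.sq_sqrt hpx.le
  have hB2 : B^2 = y + (1-y)*s^2 := Real.sq_sqrt hpy.le
  have hAB : A + B ≠ 0 := by positivity
  field_simp
  linear_combination (A + B - 2*σ) * hB2 - (A + B - 2*σ) * hA2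

lemma auxbound (σ s x y : ℝ) (hσ : 0 < σ) (hs : 0 < s) (hx0 : 0 ≤ x) (hx1 : x ≤ 1)
    (hy0 : 0 ≤ y) (hy1 : y ≤ 1) :
    (1 - s^2) * (1 - σ/s) ≤
      (1 - s^2) * (1 - 2*σ/(Real.sqrt (x + (1-x)*s^2) + Real.sqrt (y + (1-y)*s^2))) := by
  have hpx := auxpos s hs hx0 hx1
  have hpy := auxpos s hs hy0 hy1
  set A := Real.sqrt (x + (1-x)*s^2) with hA
  set B := Real.sqrt (y + (1-y)*s^2) with hB
  have hApos : 0 < A := Real.sqrt_pos.2 hpx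
  have hBpos : 0 < B := Real.sqrt_pos.2 hpy
  have hA2 : A^2 = x + (1-x)*s^2 := Real.sq_sqrt hpx.le
  have hB2 : B^2 = y + (1-y)*s^2 := Real.sq_sqrt hpy.le
  have e1 : (1-s^2)*(A-s)*(A+s) = (1-s^2)^2*x := by linear_combination (1-s^2)*hA2
  have e2 : (1-s^2)*(B-s)*(B+s) = (1-s^2)^2*y := by linear_combination (1-s^2)*hB2
  have h1 : 0 ≤ (1-s^2)*(A-s) := by
    nlinarith [mul_nonneg (sq_nonneg (1-s^2)) hx0]
  have h2 : 0 ≤ (1-s^2)*(B-s) := by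
    nlinarith [mul_nonneg (sq_nonneg (1-s^2)) hy0]
  have key : (1-s^2)*(2*σ)/(A+B) ≤ (1-s^2)*(2*σ)/(2*s) := by
    rw [div_le_div_iff₀ (by positivity) (by positivity)]
    nlinarith [mul_nonneg hσ.le h1, mul_nonneg hσ.le h2]
  have eL : (1-s^2)*(1-σ/s) = (1-s^2) - (1-s^2)*(2*σ)/(2*s) := by
    field_simp
  have eR : (1-s^2)*(1 - 2*σ/(A+B)) = (1-s^2) - (1-s^2)*(2*σ)/(A+B) := by
    ring
  linarith [key, eL, eR]

theorem stmt1 (d : ℕ) (σ σh : Fin d → ℝ)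
    (hσ : ∀ j, 0 < σ j) (hσh : ∀ j, 0 < σh j) (hne : ∀ j, σh j ≠ 1) :
    MonotoneOn (fun x => ∑ j, (Real.sqrt (x + (1 - x) * (σh j)^2) - σ j)^2)
      (Set.Icc (0:ℝ) 1)
    ↔ 0 ≤ ∑ j, (1 - σ j / σh j) * (1 - (σh j)^2) := by
  set f : ℝ → ℝ := fun x => ∑ j, (Real.sqrt (x + (1 - x) * (σh j)^2) - σ j)^2 with hf
  set S : ℝ → ℝ → ℝ := fun x y => ∑ j, (1 - (σh j)^2) *
      (1 - 2*σ j/(Real.sqrt (x + (1-x)*(σh j)^2) + Real.sqrt (y + (1-y)*(σh j)^2))) with hS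
  have hdiff : ∀ x ∈ Set.Icc (0:ℝ) 1, ∀ y ∈ Set.Icc (0:ℝ) 1,
      f y - f x = (y - x) * S x y := by
    intro x hx y hy
    rw [hf, hS, ← Finset.sum_sub_distrib, Finset.mul_sum]
    refine Finset.sum_congr rfl fun j _ => ?_
    exact auxident (σ j) (σh j) x y (hσh j) hx.1 hx.2 hy.1 hy.2
  have hbound : ∀ x ∈ Set.Icc (0:ℝ) 1, ∀ y ∈ Set.Icc (0:ℝ) 1,
      (∑ j, (1 - σ j / σh j) * (1 - (σh j)^2)) ≤ S x y := by
    intro x hx y hy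
    rw [hS]
    refine Finset.sum_le_sum fun j _ => ?_
    rw [mul_comm]
    exact auxbound (σ j) (σh j) x y (hσ j) (hσh j) hx.1 hx.2 hy.1 hy.2
  constructor
  · -- monotone → 0 ≤ sum
    intro hmono
    -- S 0 y ≥ 0 for y ∈ (0,1], then take limit y → 0+
    have hpos : ∀ y ∈ Set.Ioc (0:ℝ) 1, 0 ≤ S 0 y := by
      intro y hy
      have h0 : (0:ℝ) ∈ Set.Icc (0:ℝ) 1 := by constructor <;> norm_num
      have hy' : y ∈ Set.Icc (0:ℝ) 1 := ⟨hy.1.le, hy.2⟩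
      have hle : f 0 ≤ f y := hmono h0 hy' hy.1.le
      have := hdiff 0 h0 y hy'
      have hyS : 0 ≤ (y - 0) * S 0 y := by linarith
      nlinarith [hyS, hy.1]
    have hcont : ContinuousAt (S 0) 0 := by
      rw [hS]
      apply tendsto_finset_sum
      intro j _
      have hden : ContinuousAt (fun y : ℝ =>
          Real.sqrt (0 + (1-0)*(σh j)^2) + Real.sqrt (y + (1-y)*(σh j)^2)) 0 := by
        apply continuousAt_const.add
        exact Real.continuous_sqrt.continuousAt.comp (by fun_prop)
      have hne0 : Real.sqrt (0 + (1-(0:ℝ))*(σh j)^2) + Real.sqrt ((0:ℝ) + (1-(0:ℝ))*(σh j)^2) ≠ 0 := by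
        have : Real.sqrt ((0:ℝ) + (1-(0:ℝ))*(σh j)^2) = σh j := by
          norm_num [Real.sqrt_sq (hσh j).le]
        rw [this]
        have := hσh j
        intro hc
        linarith
      exact (continuousAt_const.mul
        (continuousAt_const.sub ((continuousAt_const.div hden hne0)))).tendsto
    have htend : Filter.Tendsto (S 0) (nhdsWithin 0 (Set.Ioi (0:ℝ))) (nhds (S 0 0)) :=
      hcont.tendsto.mono_left nhdsWithin_le_nhds
    have hlim : 0 ≤ S 0 0 := by
      refine ge_of_tendsto htend ?_
      filter_upwards [Ioc_mem_nhdsGT_of_mem (by norm_num : (0:ℝ) ∈ Set.Ico (0:ℝ) 1)] with y hy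
      exact hpos y hy
    have hS00 : S 0 0 = ∑ j, (1 - σ j / σh j) * (1 - (σh j)^2) := by
      rw [hS]
      refine Finset.sum_congr rfl fun j _ => ?_
      have hsq : Real.sqrt ((0:ℝ) + (1-(0:ℝ))*(σh j)^2) = σh j := by
        norm_num [Real.sqrt_sq (hσh j).le]
      rw [hsq, mul_comm]
      congr 1
      rw [show σh j + σh j = 2 * σh j by ring, mul_div_mul_left _ _ (two_ne_zero)]
    rwa [hS00] at hlim
  · -- 0 ≤ sum → monotone
    intro hsum x hx y hy hxy
    have := hdiff x hx y hy
    have hSxy := hbound x hx y hy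
    have : 0 ≤ (y - x) * S x y := mul_nonneg (by linarith) (by linarith)
    simp only [hf] at *
    linarith [hdiff x hx y hy]
end

section
/- Let $\hat\sigma > 0$, $T > 0$, and let $V(T)$ be the solution at time $T$ of $V'(t) = 2(1 - 2m(T-t))V(t) + 2$, $V(0) = 1$, where $m(t) = \frac{1}{1 - e^{-2t} + e^{-2t}\hat\sigma^2}$. Then $V(T) = \hat\sigma^2 \cdot \frac{1 - 2(1-\hat\sigma^2)e^{-2T} + (1-\hat\sigma^2)e^{-4T}}{1 - 2(1-\hat\sigma^2)e^{-2T} + (1-\hat\sigma^2)^2 e^{-4T}}$. -/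
open Real

theorem stmt7 (σh T : ℝ) (hσh : 0 < σh) (hT : 0 < T)
    (m : ℝ → ℝ)
    (hm : ∀ t, m t = 1 / (1 - Real.exp (-2*t) + Real.exp (-2*t) * σh^2))
    (V : ℝ → ℝ)
    (hV : ∀ t ∈ Set.Icc 0 T, HasDerivAt V (2 * (1 - 2 * m (T - t)) * V t + 2) t)
    (hV0 : V 0 = 1) :
    V T = σh^2 *
      (1 - 2*(1 - σh^2)*Real.exp (-2*T) + (1 - σh^2)*Real.exp (-4*T)) /
      (1 - 2*(1 - σh^2)*Real.exp (-2*T) + (1 - σh^2)^2*Real.exp (-4*T)) := by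
  set c : ℝ := 1 - σh^2 with hc
  -- the denominator function
  set P : ℝ → ℝ := fun t => Real.exp (2*T) - c * Real.exp (2*t) with hPdef
  have hPpos : ∀ t ∈ Set.Icc (0:ℝ) T, 0 < P t := by
    intro t ht
    have h1 : Real.exp (2*t) ≤ Real.exp (2*T) := by
      apply Real.exp_le_exp.mpr; nlinarith [ht.2]
    have h2 : 0 < Real.exp (2*t) := Real.exp_pos _
    have : P t = (Real.exp (2*T) - Real.exp (2*t)) + σh^2 * Real.exp (2*t) := by
      simp only [hPdef, hc]; ring
    nlinarith [sq_nonneg σh, mul_pos (mul_pos hσh hσh) h2]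
  -- key rewriting of m (T - t)
  have hmkey : ∀ t ∈ Set.Icc (0:ℝ) T, m (T - t) = Real.exp (2*T) / P t := by
    intro t ht
    rw [hm]
    have he : Real.exp (-2*(T-t)) = Real.exp (2*t) / Real.exp (2*T) := by
      rw [eq_div_iff (Real.exp_ne_zero _), ← Real.exp_add]; ring_nf
    rw [he]
    have hPt := (hPpos t ht).ne'
    have heT := (Real.exp_pos (2*T)).ne'
    rw [div_eq_div_iff]
    · simp only [hPdef, hc]; field_simp; ring
    · have : 1 - Real.exp (2 * t) / Real.exp (2 * T) + Real.exp (2 * t) / Real.exp (2 * T) * σh ^ 2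
          = P t / Real.exp (2*T) := by
        simp only [hPdef, hc]; field_simp; ring
      rw [this]
      exact ne_of_gt (div_pos (hPpos t ht) (Real.exp_pos _))
    · exact hPt
  -- the integrating-factor function
  set g : ℝ → ℝ := fun t =>
    (V t * Real.exp (2*t) - (Real.exp (2*t) - c * Real.exp (-2*T) * Real.exp (4*t))) / (P t)^2
    with hgdef
  have hg : ∀ t ∈ Set.Icc (0:ℝ) T, HasDerivAt g 0 t := by
    intro t ht
    have hVt := hV t ht
    have hnum : HasDerivAt
        (fun t => V t * Real.exp (2*t) - (Real.exp (2*t) - c * Real.exp (-2*T) * Real.exp (4*t)))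
        ((2 * (1 - 2 * m (T - t)) * V t + 2) * Real.exp (2*t) + V t * (Real.exp (2*t) * 2)
          - (Real.exp (2*t) * 2 - c * Real.exp (-2*T) * (Real.exp (4*t) * 4))) t := by
      have e2 : HasDerivAt (fun t : ℝ => Real.exp (2*t)) (Real.exp (2*t) * 2) t := by
        simpa using ((hasDerivAt_id t).const_mul 2).exp
      have e4 : HasDerivAt (fun t : ℝ => Real.exp (4*t)) (Real.exp (4*t) * 4) t := by
        simpa using ((hasDerivAt_id t).const_mul 4).exp
      exact (hVt.mul e2).sub (e2.sub (e4.const_mul (c * Real.exp (-2*T))))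
    have hden : HasDerivAt (fun t => (P t)^2)
        (2 * P t ^ 1 * (-(c * (Real.exp (2*t) * 2)))) t := by
      have e2 : HasDerivAt (fun t : ℝ => Real.exp (2*t)) (Real.exp (2*t) * 2) t := by
        simpa using ((hasDerivAt_id t).const_mul 2).exp
      have hP : HasDerivAt P (-(c * (Real.exp (2*t) * 2))) t := by
        simpa [hPdef] using ((e2.const_mul c).const_sub (Real.exp (2*T)))
      exact hP.pow 2
    have hPt := (hPpos t ht).ne'
    have hd := hnum.div hden (pow_ne_zero 2 hPt)
    have h4t : Real.exp (4*t) = Real.exp (2*t) * Real.exp (2*t) := by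
      rw [← Real.exp_add]; ring_nf
    have hEinv : Real.exp (-2*T) = (Real.exp (2*T))⁻¹ := by
      rw [← Real.exp_neg]; ring_nf
    refine (hd.congr_deriv ?_ : HasDerivAt g 0 t)
    rw [hmkey t ht, h4t, hEinv]
    have hx := (Real.exp_pos (2*T)).ne'
    simp only [hPdef] at hPt ⊢
    field_simp
    ring
  -- g is constant on [0,T]
  have hgT : g T = g 0 := by
    have hcont : ContinuousOn g (Set.Icc 0 T) :=
      fun t ht => (hg t ht).continuousAt.continuousWithinAt
    have hderiv : ∀ t ∈ Set.Ico (0:ℝ) T, HasDerivWithinAt g 0 (Set.Ici t) t :=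
      fun t ht => (hg t (Set.Ico_subset_Icc_self ht)).hasDerivWithinAt
    exact constant_of_has_deriv_right_zero hcont hderiv T (Set.right_mem_Icc.mpr hT.le)
  -- unfold and conclude by algebra
  have hP0 : P 0 = Real.exp (2*T) - c := by simp [hPdef]
  have hPT : P T = σh^2 * Real.exp (2*T) := by simp only [hPdef, hc]; ring
  have hP0pos := hPpos 0 (Set.left_mem_Icc.mpr hT.le)
  have hPTpos := hPpos T (Set.right_mem_Icc.mpr hT.le)
  have hx := (Real.exp_pos (2*T)).ne'
  have hEinv : Real.exp (-2*T) = (Real.exp (2*T))⁻¹ := by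
    rw [← Real.exp_neg]; ring_nf
  have hE4inv : Real.exp (-4*T) = (Real.exp (2*T))⁻¹ * (Real.exp (2*T))⁻¹ := by
    rw [show (-4:ℝ)*T = (-2*T) + (-2*T) by ring, Real.exp_add, hEinv]
  have hE4 : Real.exp (4*T) = Real.exp (2*T) * Real.exp (2*T) := by
    rw [← Real.exp_add]; ring_nf
  rw [hgdef] at hgT
  simp only [hP0, hPT, hV0, mul_zero, Real.exp_zero, mul_one, one_mul] at hgT
  rw [hEinv, hE4] at hgT
  have hA : Real.exp (2*T) - c ≠ 0 := by rw [← hP0]; exact hP0pos.ne'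
  have hσ2 : σh^2 ≠ 0 := by positivity
  rw [div_eq_div_iff (by positivity) (pow_ne_zero 2 hA)] at hgT
  field_simp at hgT
  have hVT : V T = 1 - c + c*σh^4/(Real.exp (2*T)-c)^2 := by
    rw [add_div' _ _ _ (pow_ne_zero 2 hA), eq_div_iff (pow_ne_zero 2 hA)]
    linear_combination hgT
  have hApos : 0 < Real.exp (2*T) - c := by rw [← hP0]; exact hP0pos
  have hdpos : 0 < 1 - 2*c*(Real.exp (2*T))⁻¹ + c^2*((Real.exp (2*T))⁻¹*(Real.exp (2*T))⁻¹) := by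
    have h1 : 1 - 2*c*(Real.exp (2*T))⁻¹ + c^2*((Real.exp (2*T))⁻¹*(Real.exp (2*T))⁻¹)
        = ((Real.exp (2*T) - c) * (Real.exp (2*T))⁻¹)^2 := by
      field_simp; ring
    rw [h1]
    exact pow_pos (mul_pos hApos (inv_pos.mpr (Real.exp_pos _))) 2
  rw [hVT, hEinv, hE4inv]
  have hA2 : Real.exp (2*T) - (1 - σh^2) ≠ 0 := hA
  have hd2 : 1 - 2*(1 - σh^2)*(Real.exp (2*T))⁻¹
      + (1 - σh^2)^2*((Real.exp (2*T))⁻¹*(Real.exp (2*T))⁻¹) ≠ 0 := hdpos.ne'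
  simp only [hc]
  rw [eq_div_iff hd2]
  field_simp
  ring
end
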